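/- For every n ≥ 1, the map g is orientation preserving on the punctured open unit ball: for every p ∈ ℝⁿ with 0 < ‖p‖ < 1, the Fréchet derivative of g at p (which exists) has positive determinant. -/

import Mathlib

/-- Reflection of the last coordinate in `ℝⁿ`. -/
noncomputable def negLast (n : ℕ) (p : EuclideanSpace ℝ (Fin n)) :
    EuclideanSpace ℝ (Fin n) :=
  WithLp.toLp 2 (fun i : Fin n => if (i : ℕ) = n - 1 then -p i else p i)

/-- The gluing map `g(p) = ((1 − ‖p‖)/‖p‖)·(p₁, …, p_{n−1}, −p_n)`. -/
noncomputable def gMap (n : ℕ) (p : EuclideanSpace ℝ (Fin n)) :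
    EuclideanSpace ℝ (Fin n) :=
  ((1 - ‖p‖) / ‖p‖) • negLast n p

/-- `negLast` as a linear map. -/
noncomputable def negLastL (n : ℕ) :
    EuclideanSpace ℝ (Fin n) →ₗ[ℝ] EuclideanSpace ℝ (Fin n) where
  toFun := negLast n
  map_add' p q := by
    ext i
    simp only [negLast, PiLp.add_apply, PiLp.toLp_apply]
    split_ifs <;> ring
  map_smul' c p := by
    ext i
    simp only [negLast, PiLp.toLp_apply, PiLp.smul_apply, RingHom.id_apply, smul_eq_mul]
    split_ifs <;> ring

noncomputable def negLastCLM (n : ℕ) :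
    EuclideanSpace ℝ (Fin n) →L[ℝ] EuclideanSpace ℝ (Fin n) :=
  (negLastL n).toContinuousLinearMap

lemma hasFDerivAt_norm'' {n : ℕ} (p : EuclideanSpace ℝ (Fin n)) (hp : ‖p‖ ≠ 0) :
    HasFDerivAt (fun x : EuclideanSpace ℝ (Fin n) => ‖x‖) (‖p‖⁻¹ • innerSL ℝ p) p := by
  have h2 : (‖p‖ : ℝ)^2 ≠ 0 := pow_ne_zero _ hp
  have h := ((hasStrictFDerivAt_norm_sq p).hasFDerivAt).sqrt h2
  have hfun : (fun y : EuclideanSpace ℝ (Fin n) => Real.sqrt (‖y‖^2)) = fun y => ‖y‖ := by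
    funext y; rw [Real.sqrt_sq (norm_nonneg y)]
  rw [hfun] at h
  refine h.congr_fderiv ?_
  ext y
  simp only [ContinuousLinearMap.smul_apply, smul_eq_mul, Real.sqrt_sq (norm_nonneg p),
    two_smul, ContinuousLinearMap.add_apply]
  field_simp
  ring

/-- The derivative of `gMap`. -/
noncomputable def gDeriv (n : ℕ) (p : EuclideanSpace ℝ (Fin n)) :
    EuclideanSpace ℝ (Fin n) →L[ℝ] EuclideanSpace ℝ (Fin n) :=
  (negLastCLM n).comp
    (((1 - ‖p‖) / ‖p‖) • ContinuousLinearMap.id ℝ (EuclideanSpace ℝ (Fin n)) +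
      ((-(‖p‖^2)⁻¹) • (‖p‖⁻¹ • innerSL ℝ p)).smulRight p)

lemma hasFDerivAt_gMap {n : ℕ} (p : EuclideanSpace ℝ (Fin n)) (h0 : 0 < ‖p‖) :
    HasFDerivAt (gMap n) (gDeriv n p) p := by
  have hnorm := hasFDerivAt_norm'' p h0.ne'
  have hdiv : HasDerivAt (fun r : ℝ => (1 - r)/r) (-(‖p‖^2)⁻¹) ‖p‖ := by
    have h1 : HasDerivAt (fun r : ℝ => 1 - r) (-1) ‖p‖ := by
      simpa using (hasDerivAt_id ‖p‖).const_sub 1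
    have := h1.div (hasDerivAt_id ‖p‖) h0.ne'
    refine this.congr_deriv ?_
    simp only [id]
    field_simp
    ring
  have hs : HasFDerivAt (fun x : EuclideanSpace ℝ (Fin n) => (1 - ‖x‖)/‖x‖)
      ((-(‖p‖^2)⁻¹) • (‖p‖⁻¹ • innerSL ℝ p)) p := by
    exact hdiv.comp_hasFDerivAt p hnorm
  have hf : HasFDerivAt (fun x : EuclideanSpace ℝ (Fin n) => ((1 - ‖x‖)/‖x‖) • x)
      (((1 - ‖p‖) / ‖p‖) • ContinuousLinearMap.id ℝ (EuclideanSpace ℝ (Fin n)) +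
        ((-(‖p‖^2)⁻¹) • (‖p‖⁻¹ • innerSL ℝ p)).smulRight p) p := by
    exact hs.smul (hasFDerivAt_id p)
  have hcomp := (negLastCLM n).hasFDerivAt.comp p hf
  have : gMap n = (negLastCLM n) ∘ (fun x : EuclideanSpace ℝ (Fin n) => ((1 - ‖x‖)/‖x‖) • x) := by
    funext x
    show gMap n x = negLastCLM n (((1 - ‖x‖)/‖x‖) • x)
    rw [map_smul]
    rfl
  rw [this]
  exact hcomp

/-- `g` is orientation preserving on the punctured open unit ball: at every
`p` with `0 < ‖p‖ < 1` the Fréchet derivative of `g` exists and has positive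
determinant. -/
theorem stmt3 (n : ℕ) (hn : 1 ≤ n) (p : EuclideanSpace ℝ (Fin n))
    (h0 : 0 < ‖p‖) (h1 : ‖p‖ < 1) :
    ∃ D : EuclideanSpace ℝ (Fin n) →L[ℝ] EuclideanSpace ℝ (Fin n),
      HasFDerivAt (gMap n) D p ∧
      0 < LinearMap.det (D : EuclideanSpace ℝ (Fin n) →ₗ[ℝ] EuclideanSpace ℝ (Fin n)) := by
  classical
  refine ⟨gDeriv n p, hasFDerivAt_gMap p h0, ?_⟩
  set r : ℝ := ‖p‖ with hr
  set c : ℝ := (1 - r) / r with hc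
  have hrne : r ≠ 0 := h0.ne'
  have h1r : (0:ℝ) < 1 - r := by linarith
  have hcpos : 0 < c := div_pos h1r h0
  set aa : ℝ := -(r^2)⁻¹ * r⁻¹ with haa
  set b := (EuclideanSpace.basisFun (Fin n) ℝ).toBasis with hb
  set lastI : Fin n := ⟨n - 1, by omega⟩ with hlast
  set Dl : EuclideanSpace ℝ (Fin n) →ₗ[ℝ] EuclideanSpace ℝ (Fin n) :=
    ((((1 - ‖p‖) / ‖p‖) • ContinuousLinearMap.id ℝ (EuclideanSpace ℝ (Fin n)) +
      ((-(‖p‖^2)⁻¹) • (‖p‖⁻¹ • innerSL ℝ p)).smulRight p :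
      EuclideanSpace ℝ (Fin n) →L[ℝ] EuclideanSpace ℝ (Fin n)) :
      EuclideanSpace ℝ (Fin n) →ₗ[ℝ] EuclideanSpace ℝ (Fin n)) with hDl
  have hsplit : (gDeriv n p : EuclideanSpace ℝ (Fin n) →ₗ[ℝ] EuclideanSpace ℝ (Fin n))
      = (negLastL n).comp Dl := by
    rw [gDeriv, hDl]
    rfl
  rw [hsplit, LinearMap.det_comp]
  -- determinant of the reflection
  have hdetR : LinearMap.det (negLastL n) = -1 := by
    rw [← LinearMap.det_toMatrix b]
    have hmat : LinearMap.toMatrix b b (negLastL n)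
        = Matrix.diagonal (fun i => if i = lastI then (-1:ℝ) else 1) := by
      ext i j
      rw [LinearMap.toMatrix_apply]
      simp only [hb, OrthonormalBasis.coe_toBasis, OrthonormalBasis.coe_toBasis_repr_apply,
        EuclideanSpace.basisFun_repr, EuclideanSpace.basisFun_apply, negLastL,
        LinearMap.coe_mk, AddHom.coe_mk, negLast, PiLp.toLp_apply, EuclideanSpace.single_apply,
        Matrix.diagonal_apply]
      by_cases hij : i = j <;> by_cases hl : (i : ℕ) = n - 1 <;>
        simp_all [Fin.ext_iff, hlast]
    rw [hmat, Matrix.det_diagonal, Finset.prod_ite_eq' Finset.univ lastI fun _ => (-1:ℝ)]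
    simp
  rw [hdetR]
  -- determinant of the radial part
  have hmat2 : LinearMap.toMatrix b b Dl
      = c • (1 : Matrix (Fin n) (Fin n) ℝ)
        + aa • Matrix.vecMulVec (fun i => p i) (fun i => p i) := by
    ext i j
    rw [LinearMap.toMatrix_apply]
    simp only [hDl, ContinuousLinearMap.coe_coe, ContinuousLinearMap.add_apply,
      ContinuousLinearMap.smul_apply, ContinuousLinearMap.coe_id', id_eq,
      ContinuousLinearMap.smulRight_apply, innerSL_apply_apply, hb,
      OrthonormalBasis.coe_toBasis, OrthonormalBasis.coe_toBasis_repr_apply,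
      EuclideanSpace.basisFun_repr, EuclideanSpace.basisFun_apply,
      PiLp.add_apply, PiLp.smul_apply, smul_eq_mul,
      Matrix.add_apply, Matrix.smul_apply, Matrix.one_apply, Matrix.vecMulVec_apply]
    have hinner : (inner ℝ p (EuclideanSpace.single j (1:ℝ)) : ℝ) = p j := by
      simp [PiLp.inner_apply, EuclideanSpace.single_apply]
    rw [hinner]
    simp only [EuclideanSpace.single_apply, haa, hc, hr]
    split_ifs <;> ring
  have hsum : ∑ i, p i * p i = r ^ 2 := by
    rw [hr, ← real_inner_self_eq_norm_sq]
    simp only [PiLp.inner_apply, RCLike.inner_apply, conj_trivial]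
  have hdet2 : LinearMap.det Dl = c ^ n * (1 + (aa / c) * r ^ 2) := by
    rw [← LinearMap.det_toMatrix b, hmat2]
    have hfac : c • (1 : Matrix (Fin n) (Fin n) ℝ)
        + aa • Matrix.vecMulVec (fun i => p i) (fun i => p i)
        = c • ((1 : Matrix (Fin n) (Fin n) ℝ)
            + Matrix.vecMulVec (fun i => p i) ((aa / c) • fun i => p i)) := by
      ext i j
      simp only [Matrix.add_apply, Matrix.smul_apply, Matrix.vecMulVec_apply,
        smul_eq_mul, Pi.smul_apply]
      field_simp
    rw [hfac, Matrix.det_smul, Matrix.vecMulVec_eq Unit,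
      Matrix.det_one_add_replicateCol_mul_replicateRow]
    simp only [dotProduct, Pi.smul_apply, smul_eq_mul, Fintype.card_fin]
    rw [show ∑ x, aa / c * p x * p x = (aa / c) * ∑ i, p i * p i from by
      rw [Finset.mul_sum]; exact Finset.sum_congr rfl fun i _ => by ring, hsum]
  rw [hdet2]
  have hval : 1 + (aa / c) * r ^ 2 = -(r / (1 - r)) := by
    rw [haa, hc]
    field_simp
    ring
  rw [hval]
  have : (-1 : ℝ) * (c ^ n * -(r / (1 - r))) = c ^ n * (r / (1 - r)) := by ring
  rw [this]
  positivity
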